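/- Let ℜ(x) = (#x, −½(A,x)_𝔤) define the lifted action on E = TP ⊕ T*P with H-twisted Dorfman bracket, and let K = ℜ(P×𝔤) ⊆ E. Then for any Φ ∈ C^∞(P,𝔤), x ▷ ℜ(Φ) = ℜ([x,Φ]_𝔤 + #x.Φ); consequently K is invariant under the induced action, and ℜ(Φ) is a G-invariant section of K if and only if Φ is Ad-equivariant, i.e., Φ ∈ C^∞_{Ad}(P,𝔤) ≅ Γ(𝔤_P). -/

import Mathlib

/-!
An algebraic model of a principal `G`-bundle `π : P → M`:
`R` is the ring of smooth functions `C^∞(P)`, vector fields on `P` are derivations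
of `R`, `g` is the Lie algebra of `G`, and `S` models the `R`-module `C^∞(P, 𝔤)` of
`𝔤`-valued functions, with its pointwise Lie bracket `brS`, pointwise invariant
pairing `c`, componentwise derivative `par`, constants `ι : 𝔤 → C^∞(P,𝔤)`,
fundamental vector fields `σ` and their `C^∞(P)`-linear extension
`σhat : C^∞(P,𝔤) → 𝔛(P)` (the map `j`).
-/

structure GaugeModel (R : Type*) [CommRing R] [Algebra ℝ R]
    (g : Type*) [LieRing g] [LieAlgebra ℝ g]
    (S : Type*) [AddCommGroup S] [Module R S] where
  /-- fundamental vector fields of the (right) `G`-action. -/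
  σ : g → Derivation ℝ R R
  /-- the map `j` : vertical vector field generated by a `𝔤`-valued function. -/
  σhat : S → Derivation ℝ R R
  /-- constant `𝔤`-valued functions. -/
  ι : g → S
  /-- pointwise Lie bracket on `𝔤`-valued functions. -/
  brS : S → S → S
  /-- pointwise ad-invariant pairing `(·,·)_𝔤`. -/
  c : S → S → R
  /-- componentwise derivative of `𝔤`-valued functions along a vector field. -/
  par : Derivation ℝ R R → S → S
  σ_bracket : ∀ x y : g, ⁅σ x, σ y⁆ = σ ⁅x, y⁆
  σhat_ι : ∀ x : g, σhat (ι x) = σ x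
  σhat_smul : ∀ (f : R) (s : S), σhat (f • s) = f • σhat s
  σhat_add : ∀ s t : S, σhat (s + t) = σhat s + σhat t
  ι_add : ∀ x y : g, ι (x + y) = ι x + ι y
  ι_bracket : ∀ x y : g, ι ⁅x, y⁆ = brS (ι x) (ι y)
  brS_smul_left : ∀ (f : R) (a b : S), brS (f • a) b = f • brS a b
  brS_add_left : ∀ a a' b : S, brS (a + a') b = brS a b + brS a' b
  brS_antisymm : ∀ a b : S, brS a b = - brS b a
  brS_leibniz : ∀ a b e : S, brS a (brS b e) = brS (brS a b) e + brS b (brS a e)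
  c_symm : ∀ a b : S, c a b = c b a
  c_smul_left : ∀ (f : R) (a b : S), c (f • a) b = f * c a b
  c_add_left : ∀ a a' b : S, c (a + a') b = c a b + c a' b
  /-- ad-invariance of the pairing. -/
  c_ad : ∀ a b e : S, c (brS a b) e + c b (brS a e) = 0
  par_add : ∀ (X : Derivation ℝ R R) (s t : S), par X (s + t) = par X s + par X t
  par_smul : ∀ (X : Derivation ℝ R R) (f : R) (s : S),
    par X (f • s) = (X f) • s + f • par X s
  par_lin : ∀ (f : R) (X Y : Derivation ℝ R R) (s : S),
    par (f • X + Y) s = f • par X s + par Y s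
  /-- `par` is the (flat) componentwise derivative. -/
  par_flat : ∀ (X Y : Derivation ℝ R R) (s : S),
    par ⁅X, Y⁆ s = par X (par Y s) - par Y (par X s)
  par_const : ∀ (X : Derivation ℝ R R) (x : g), par X (ι x) = 0
  par_brS : ∀ (X : Derivation ℝ R R) (a b : S),
    par X (brS a b) = brS (par X a) b + brS a (par X b)
  par_c : ∀ (X : Derivation ℝ R R) (a b : S),
    X (c a b) = c (par X a) b + c a (par X b)
  /-- bracket of vertical vector fields. -/
  vert_bracket : ∀ a b : S,
    ⁅σhat a, σhat b⁆ = σhat (brS a b + par (σhat a) b - par (σhat b) a)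

namespace GaugeModel

variable {R : Type*} [CommRing R] [Algebra ℝ R]
variable {g : Type*} [LieRing g] [LieAlgebra ℝ g]
variable {S : Type*} [AddCommGroup S] [Module R S]

/-- A `𝔤`-valued function is `Ad`-equivariant (a section of the adjoint bundle
`𝔤_P`), infinitesimally: its derivative along any vertical vector field is given
by minus the pointwise bracket. -/
def IsEquivariant (M : GaugeModel R g S) (s : S) : Prop :=
  ∀ a : S, M.par (M.σhat a) s = - M.brS a s

end GaugeModel

namespace GaugeModel

variable {R : Type*} [CommRing R] [Algebra ℝ R]
variable {g : Type*} [LieRing g] [LieAlgebra ℝ g]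
variable {S : Type*} [AddCommGroup S] [Module R S]

/-- `dA(X,Y) = X.A(Y) − Y.A(X) − A([X,Y])` for a `𝔤`-valued `1`-form `A` on `P`. -/
def dA (M : GaugeModel R g S) (A : Derivation ℝ R R → S)
    (X Y : Derivation ℝ R R) : S :=
  M.par X (A Y) - M.par Y (A X) - A ⁅X, Y⁆

/-- The Chern–Simons `3`-form
`CS₃(A) = ⟨dA ∧ A⟩_𝔤 + (1/3)⟨[A ∧ A]_𝔤 ∧ A⟩_𝔤`, written out on vector fields. -/
noncomputable def CS3 (M : GaugeModel R g S) (A : Derivation ℝ R R → S)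
    (X Y Z : Derivation ℝ R R) : R :=
  (M.c (M.dA A X Y) (A Z) + M.c (M.dA A Y Z) (A X) + M.c (M.dA A Z X) (A Y))
    + (2 / 3 : ℝ) • (M.c (M.brS (A X) (A Y)) (A Z)
        + M.c (M.brS (A Y) (A Z)) (A X) + M.c (M.brS (A Z) (A X)) (A Y))

/-- The `C^∞(P)`-linear extension of `ℜ` to `𝔤`-valued functions:
`ℜ(Φ) = (j(Φ), −½(A,Φ)_𝔤) ∈ Γ(TP ⊕ T*P)`. -/
noncomputable def Rhat (M : GaugeModel R g S) (A : Derivation ℝ R R → S) (Φ : S) :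
    Derivation ℝ R R × (Derivation ℝ R R → R) :=
  (M.σhat Φ, fun Z => (-(1 / 2 : ℝ)) • M.c (A Z) Φ)

/-- The `H`-twisted Dorfman bracket on `Γ(TP ⊕ T*P)`, written pointwise. -/
def dorf (H : Derivation ℝ R R → Derivation ℝ R R → Derivation ℝ R R → R)
    (ψ φ : Derivation ℝ R R × (Derivation ℝ R R → R)) :
    Derivation ℝ R R × (Derivation ℝ R R → R) :=
  (⁅ψ.1, φ.1⁆, fun Z =>
    (ψ.1 (φ.2 Z) - φ.2 ⁅ψ.1, Z⁆)
      - (φ.1 (ψ.2 Z) - Z (ψ.2 φ.1) - ψ.2 ⁅φ.1, Z⁆)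
      - H ψ.1 φ.1 Z)

/-!
`K` is spanned by the sections `ℜ(x) = #x + ξₓ` with `ξₓ = −½(A,x)_𝔤`. In the Dorfman bracket
`⟦#x + ξₓ, Y + η⟧ = [#x,Y] + L_{#x}η − ι_Y(dξₓ + ι_{#x}H)` the last term vanishes: `H₀` is basic
and the cubic terms of `ι_{#x}CS₃(A)` cancel against those coming from `dA(#x,·) = −[x,A]_𝔤`, leaving
`ι_{#x}H = ½(dA,x)_𝔤 = −dξₓ`. What remains is computed by the equivariance of `A`,
`L_{#x}(A,Φ)_𝔤 = (A, [x,Φ]_𝔤 + #x.Φ)_𝔤`, and by the bracket of vertical fields. The invariance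
criterion then follows because `ℜ` is injective.
-/

section Pairing

variable (M : GaugeModel R g S)

lemma c_zero_left (b : S) : M.c 0 b = 0 := by
  simpa using M.c_smul_left 0 0 b

lemma c_zero_right (a : S) : M.c a 0 = 0 := by
  rw [M.c_symm, c_zero_left]

lemma c_neg_left (a b : S) : M.c (-a) b = - M.c a b := by
  simpa using M.c_smul_left (-1) a b

lemma c_sub_left (a a' b : S) : M.c (a - a') b = M.c a b - M.c a' b := by
  rw [sub_eq_add_neg, M.c_add_left, c_neg_left, ← sub_eq_add_neg]

lemma c_add_right (a b b' : S) : M.c a (b + b') = M.c a b + M.c a b' := by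
  rw [M.c_symm, M.c_add_left, M.c_symm b a, M.c_symm b' a]

lemma c_brS_left (a b e : S) : M.c (M.brS a b) e = - M.c b (M.brS a e) :=
  eq_neg_of_add_eq_zero_left (M.c_ad a b e)

lemma c_brS_cyclic (a b e : S) : M.c (M.brS a b) e = M.c (M.brS e a) b := by
  rw [c_brS_left, M.c_symm, M.brS_antisymm a e, c_neg_left, neg_neg]

lemma σhat_zero : M.σhat 0 = 0 := by
  simpa using M.σhat_smul 0 0

end Pairing

section Connection

variable (M : GaugeModel R g S) {A : Derivation ℝ R R → S}

lemma dA_swap (hAadd : ∀ X Y, A (X + Y) = A X + A Y) (X Y : Derivation ℝ R R) :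
    M.dA A X Y = - M.dA A Y X := by
  have hAneg : A ⁅Y, X⁆ = - A ⁅X, Y⁆ := by
    rw [← lie_skew Y X]
    exact (AddMonoidHom.mk' A hAadd).map_neg _
  rw [dA, dA, hAneg]
  abel

lemma dA_σ_left (hAconn : ∀ x : g, A (M.σ x) = M.ι x)
    (hAeq : ∀ (x : g) (Y : Derivation ℝ R R),
      M.par (M.σ x) (A Y) - A ⁅M.σ x, Y⁆ = - M.brS (M.ι x) (A Y))
    (x : g) (Y : Derivation ℝ R R) :
    M.dA A (M.σ x) Y = - M.brS (M.ι x) (A Y) := by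
  rw [dA, hAconn, M.par_const, sub_zero, hAeq]

lemma c_dA_ι (x : g) (Y Z : Derivation ℝ R R) :
    M.c (M.dA A Y Z) (M.ι x) =
      Y (M.c (A Z) (M.ι x)) - Z (M.c (A Y) (M.ι x)) - M.c (A ⁅Y, Z⁆) (M.ι x) := by
  rw [M.par_c, M.par_c, M.par_const, M.par_const, c_zero_right, c_zero_right, add_zero,
    add_zero, dA, c_sub_left, c_sub_left]

lemma CS3_σ_left (hAadd : ∀ X Y, A (X + Y) = A X + A Y)
    (hAconn : ∀ x : g, A (M.σ x) = M.ι x)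
    (hAeq : ∀ (x : g) (Y : Derivation ℝ R R),
      M.par (M.σ x) (A Y) - A ⁅M.σ x, Y⁆ = - M.brS (M.ι x) (A Y))
    (x : g) (Y Z : Derivation ℝ R R) :
    M.CS3 A (M.σ x) Y Z = M.c (M.dA A Y Z) (M.ι x) := by
  have hswap : M.c (M.brS (M.ι x) (A Z)) (A Y) = - M.c (M.brS (M.ι x) (A Y)) (A Z) := by
    rw [c_brS_left, M.c_symm]
  have hcyc₁ : M.c (M.brS (A Y) (A Z)) (M.ι x) = M.c (M.brS (M.ι x) (A Y)) (A Z) :=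
    M.c_brS_cyclic _ _ _
  have hcyc₂ : M.c (M.brS (A Z) (M.ι x)) (A Y) = M.c (M.brS (M.ι x) (A Y)) (A Z) := by
    rw [c_brS_cyclic, hcyc₁]
  rw [CS3, M.dA_swap hAadd Z, dA_σ_left M hAconn hAeq, dA_σ_left M hAconn hAeq, neg_neg,
    hAconn, hswap, hcyc₁, hcyc₂, c_neg_left]
  module

lemma σ_apply_c_connection
    (hAeq : ∀ (x : g) (Y : Derivation ℝ R R),
      M.par (M.σ x) (A Y) - A ⁅M.σ x, Y⁆ = - M.brS (M.ι x) (A Y))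
    (x : g) (Φ : S) (Z : Derivation ℝ R R) :
    M.σ x (M.c (A Z) Φ) - M.c (A ⁅M.σ x, Z⁆) Φ =
      M.c (A Z) (M.brS (M.ι x) Φ + M.par (M.σ x) Φ) := by
  rw [M.par_c, add_sub_right_comm, ← c_sub_left, hAeq, c_neg_left, c_brS_left, neg_neg,
    c_add_right]

lemma dorf_Rhat_ι
    (hAeq : ∀ (x : g) (Y : Derivation ℝ R R),
      M.par (M.σ x) (A Y) - A ⁅M.σ x, Y⁆ = - M.brS (M.ι x) (A Y))
    {H : Derivation ℝ R R → Derivation ℝ R R → Derivation ℝ R R → R} (x : g)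
    (hH : ∀ Y Z, H (M.σ x) Y Z = (1 / 2 : ℝ) • M.c (M.dA A Y Z) (M.ι x)) (Φ : S) :
    dorf H (M.Rhat A (M.ι x)) (M.Rhat A Φ) = M.Rhat A (M.brS (M.ι x) Φ + M.par (M.σ x) Φ) := by
  refine Prod.ext ?_ (funext fun Z => ?_)
  · show ⁅M.σhat (M.ι x), M.σhat Φ⁆ = M.σhat (M.brS (M.ι x) Φ + M.par (M.σ x) Φ)
    rw [M.vert_bracket, M.σhat_ι, M.par_const, sub_zero]
  · have hlie := M.σ_apply_c_connection hAeq x Φ Z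
    simp only [dorf, Rhat, M.σhat_ι, Derivation.map_smul, hH, c_dA_ι]
    linear_combination (norm := module) (-(1 / 2 : ℝ)) • hlie

lemma Rhat_eq_zero_iff (A : Derivation ℝ R R → S) (hinj : ∀ s : S, M.σhat s = 0 → s = 0)
    (Φ : S) : M.Rhat A Φ = ((0 : Derivation ℝ R R), fun _ => (0 : R)) ↔ Φ = 0 := by
  refine ⟨fun h => hinj Φ (congrArg Prod.fst h), ?_⟩
  rintro rfl
  simp only [Rhat, σhat_zero, c_zero_right, smul_zero]

end Connection

theorem action_on_K_and_invariant_sections_general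
    (M : GaugeModel R g S)
    (A : Derivation ℝ R R → S)
    (hAlin : ∀ (f : R) (X Y : Derivation ℝ R R), A (f • X + Y) = f • A X + A Y)
    (hAconn : ∀ x : g, A (M.σ x) = M.ι x)
    (hAeq : ∀ (x : g) (Y : Derivation ℝ R R),
      M.par (M.σ x) (A Y) - A ⁅M.σ x, Y⁆ = - M.brS (M.ι x) (A Y))
    -- `H₀` is (the pullback of) a `3`-form on the base: basic and `G`-invariant
    (H₀ : Derivation ℝ R R → Derivation ℝ R R → Derivation ℝ R R → R)
    (hH₀bas : ∀ (x : g) (Y Z : Derivation ℝ R R), H₀ (M.σ x) Y Z = 0)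
    -- `ℜ` (equivalently `j`) is fiber-wise injective
    (hinj : ∀ s : S, M.σhat s = 0 → s = 0) :
    -- `x ▷ ℜ(Φ) = ℜ([x,Φ]_𝔤 + #x.Φ)`; in particular `K` is invariant
    (∀ (x : g) (Φ : S),
      dorf (fun X Y Z => H₀ X Y Z + (1 / 2 : ℝ) • M.CS3 A X Y Z)
          (M.Rhat A (M.ι x)) (M.Rhat A Φ) =
        M.Rhat A (M.brS (M.ι x) Φ + M.par (M.σ x) Φ)) ∧
    -- `ℜ(Φ)` is a `G`-invariant section iff `Φ` is `Ad`-equivariant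
    (∀ Φ : S,
      (∀ x : g, dorf (fun X Y Z => H₀ X Y Z + (1 / 2 : ℝ) • M.CS3 A X Y Z)
          (M.Rhat A (M.ι x)) (M.Rhat A Φ) =
        ((0 : Derivation ℝ R R), fun _ => (0 : R))) ↔
      (∀ x : g, M.par (M.σ x) Φ = - M.brS (M.ι x) Φ)) := by
  have hAadd : ∀ X Y, A (X + Y) = A X + A Y := by simpa using hAlin 1
  have action : ∀ (x : g) (Φ : S),
      dorf (fun X Y Z => H₀ X Y Z + (1 / 2 : ℝ) • M.CS3 A X Y Z)
          (M.Rhat A (M.ι x)) (M.Rhat A Φ) =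
        M.Rhat A (M.brS (M.ι x) Φ + M.par (M.σ x) Φ) := fun x =>
    M.dorf_Rhat_ι hAeq x fun Y Z => by
      rw [hH₀bas, zero_add, M.CS3_σ_left hAadd hAconn hAeq]
  refine ⟨action, fun Φ => forall_congr' fun x => ?_⟩
  rw [action, M.Rhat_eq_zero_iff A hinj, add_eq_zero_iff_eq_neg']

/-- With `ℜ(x) = (#x, −½(A,x)_𝔤)` and the `H`-twisted Dorfman
bracket for `H = π*(H₀) + ½CS₃(A)`, let `K = ℜ(P×𝔤) ⊆ TP ⊕ T*P`.  For any
`Φ ∈ C^∞(P,𝔤)` one has `x ▷ ℜ(Φ) = ℜ([x,Φ]_𝔤 + #x.Φ)`; consequently `K` is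
invariant under the induced action, and `ℜ(Φ)` is a `G`-invariant section of `K`
if and only if `Φ` is `Ad`-equivariant, i.e. `Φ ∈ C^∞_{Ad}(P,𝔤) ≅ Γ(𝔤_P)`. -/
theorem action_on_K_and_invariant_sections
    (M : GaugeModel R g S)
    (A : Derivation ℝ R R → S)
    (hAlin : ∀ (f : R) (X Y : Derivation ℝ R R), A (f • X + Y) = f • A X + A Y)
    (hAconn : ∀ x : g, A (M.σ x) = M.ι x)
    (hAeq : ∀ (x : g) (Y : Derivation ℝ R R),
      M.par (M.σ x) (A Y) - A ⁅M.σ x, Y⁆ = - M.brS (M.ι x) (A Y))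
    -- `H₀` is (the pullback of) a `3`-form on the base: basic and `G`-invariant
    (H₀ : Derivation ℝ R R → Derivation ℝ R R → Derivation ℝ R R → R)
    (hH₀alt₁ : ∀ X Y Z, H₀ X Y Z = - H₀ Y X Z)
    (hH₀alt₂ : ∀ X Y Z, H₀ X Y Z = - H₀ X Z Y)
    (hH₀bas : ∀ (x : g) (Y Z : Derivation ℝ R R), H₀ (M.σ x) Y Z = 0)
    (hH₀inv : ∀ (x : g) (Y Z W : Derivation ℝ R R),
      M.σ x (H₀ Y Z W) = H₀ ⁅M.σ x, Y⁆ Z W + H₀ Y ⁅M.σ x, Z⁆ W + H₀ Y Z ⁅M.σ x, W⁆)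
    -- `ℜ` (equivalently `j`) is fiber-wise injective
    (hinj : ∀ s : S, M.σhat s = 0 → s = 0) :
    -- `x ▷ ℜ(Φ) = ℜ([x,Φ]_𝔤 + #x.Φ)`; in particular `K` is invariant
    (∀ (x : g) (Φ : S),
      dorf (fun X Y Z => H₀ X Y Z + (1 / 2 : ℝ) • M.CS3 A X Y Z)
          (M.Rhat A (M.ι x)) (M.Rhat A Φ) =
        M.Rhat A (M.brS (M.ι x) Φ + M.par (M.σ x) Φ)) ∧
    -- `ℜ(Φ)` is a `G`-invariant section iff `Φ` is `Ad`-equivariant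
    (∀ Φ : S,
      (∀ x : g, dorf (fun X Y Z => H₀ X Y Z + (1 / 2 : ℝ) • M.CS3 A X Y Z)
          (M.Rhat A (M.ι x)) (M.Rhat A Φ) =
        ((0 : Derivation ℝ R R), fun _ => (0 : R))) ↔
      (∀ x : g, M.par (M.σ x) Φ = - M.brS (M.ι x) Φ)) :=
  action_on_K_and_invariant_sections_general M A hAlin hAconn hAeq H₀ hH₀bas hinj

end GaugeModel
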